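/- Let a be a real number with a ≤ −1 or a ≥ √2/2, and define g_a(x) = (x + x³ + a·x·√(1 + x²))/((1 + x²)(1 + a·√(1 + x²))) − arctan x for x > 0. Then g_a is strictly decreasing on (0, ∞), and consequently g_a(x) < 0 for all x > 0. -/

import Mathlib

/-!
Writing `s = √(1 + x²)`, a direct computation gives
`g_a'(x) = -x² (a + (2a² - 1) s) / (s³ (1 + a s)²)`.
For `s > 1` the factor `a + (2a² - 1) s` is positive under the hypothesis on `a`
(for `a ≤ -1` it exceeds `(2a - 1)(a + 1) ≥ 0`, for `a ≥ √2/2` both terms are nonnegative and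
`a > 0`), so `g_a` is strictly decreasing. Since `g_a(x) → 0` as `x → 0⁺`, it is negative.
-/

open Real Set Filter Topology

noncomputable def shaferG (a x : ℝ) : ℝ :=
  (x + x ^ 3 + a * x * √(1 + x ^ 2)) / ((1 + x ^ 2) * (1 + a * √(1 + x ^ 2))) - arctan x

lemma hasDerivAt_sqrt_one_add_sq (x : ℝ) :
    HasDerivAt (fun y => √(1 + y ^ 2)) (x / √(1 + x ^ 2)) x := by
  have h := ((hasDerivAt_pow 2 x).const_add 1).sqrt (by positivity)
  convert h using 1
  field_simp
  ring

lemma hasDerivAt_shaferG {a x : ℝ} (h : 1 + a * √(1 + x ^ 2) ≠ 0) :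
    HasDerivAt (shaferG a)
      (-(x ^ 2 * (a + (2 * a ^ 2 - 1) * √(1 + x ^ 2))) /
        (√(1 + x ^ 2) ^ 3 * (1 + a * √(1 + x ^ 2)) ^ 2)) x := by
  have hs := hasDerivAt_sqrt_one_add_sq x
  have hsq : HasDerivAt (fun y : ℝ => 1 + y ^ 2) (2 * x) x := by
    simpa using (hasDerivAt_pow 2 x).const_add 1
  have hnum : HasDerivAt (fun y => y + y ^ 3 + a * y * √(1 + y ^ 2))
      (1 + 3 * x ^ 2 + (a * √(1 + x ^ 2) + a * x * (x / √(1 + x ^ 2)))) x :=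
    (((hasDerivAt_id' x).add (hasDerivAt_pow 3 x)).add
      (((hasDerivAt_id' x).const_mul a).mul hs)).congr_deriv (by norm_num)
  have hden : HasDerivAt (fun y => (1 + y ^ 2) * (1 + a * √(1 + y ^ 2)))
      (2 * x * (1 + a * √(1 + x ^ 2)) + (1 + x ^ 2) * (a * (x / √(1 + x ^ 2)))) x :=
    hsq.mul ((hs.const_mul a).const_add 1)
  refine ((hnum.div hden (mul_ne_zero (by positivity) h)).sub
    (hasDerivAt_arctan x)).congr_deriv ?_
  set s := √(1 + x ^ 2)
  have hs0 : s ≠ 0 := by positivity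
  have hx2 : x ^ 2 = s ^ 2 - 1 := by
    rw [sq_sqrt (by positivity)]
    ring
  field_simp
  rw [hx2]
  ring

lemma shafer_factor_pos {a s : ℝ} (ha : a ≤ -1 ∨ a ≥ √2 / 2) (hs : 1 < s) :
    0 < a + (2 * a ^ 2 - 1) * s := by
  rcases ha with ha | ha
  · have h1 : 0 < (2 * a ^ 2 - 1) * (s - 1) := mul_pos (by nlinarith) (by linarith)
    nlinarith
  · have h2 : 1 ≤ 2 * a ^ 2 := by
      nlinarith [sq_sqrt (show (0:ℝ) ≤ 2 by norm_num), sqrt_nonneg 2]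
    have : 0 < a := lt_of_lt_of_le (by positivity) ha
    nlinarith

lemma shaferG_deriv_neg {a x : ℝ} (ha : a ≤ -1 ∨ a ≥ √2 / 2) (hx : 0 < x) :
    deriv (shaferG a) x < 0 := by
  set s := √(1 + x ^ 2)
  have hs2 : s ^ 2 = 1 + x ^ 2 := sq_sqrt (by positivity)
  have hs : 1 < s := by nlinarith [sqrt_nonneg (1 + x ^ 2)]
  have hK := shafer_factor_pos ha hs
  -- `s (a + (2a² - 1) s) = (1 + a s)(2 a s - 1) + 1 - s²`, which is negative if `1 + a s = 0`.
  have hden : 1 + a * s ≠ 0 := fun h0 => by nlinarith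
  rw [(hasDerivAt_shaferG hden).deriv]
  exact div_neg_of_neg_of_pos (neg_neg_of_pos (by positivity)) (by positivity)

lemma shaferG_strictAntiOn {a : ℝ} (ha : a ≤ -1 ∨ a ≥ √2 / 2) :
    StrictAntiOn (shaferG a) (Ioi 0) := by
  have hderiv : ∀ x ∈ Ioi (0 : ℝ), deriv (shaferG a) x < 0 := fun x hx => shaferG_deriv_neg ha hx
  refine strictAntiOn_of_deriv_neg (convex_Ioi 0) (fun x hx => ?_) (by rwa [interior_Ioi])
  exact (differentiableAt_of_deriv_ne_zero (hderiv x hx).ne).continuousAt.continuousWithinAt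

lemma shaferG_neg_one_eq {x : ℝ} (hx : 0 < x) :
    shaferG (-1) x = -(x / √(1 + x ^ 2)) - arctan x := by
  rw [shaferG, sub_left_inj]
  set s := √(1 + x ^ 2)
  have hs2 : s ^ 2 = 1 + x ^ 2 := sq_sqrt (by positivity)
  have hs : 1 < s := by nlinarith [sqrt_nonneg (1 + x ^ 2)]
  rw [div_eq_iff (mul_ne_zero (by positivity) (by linarith))]
  field_simp
  linear_combination -hs2

lemma tendsto_shaferG_nhdsGT_zero (a : ℝ) : Tendsto (shaferG a) (𝓝[>] 0) (𝓝 0) := by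
  -- For `a = -1` the denominator vanishes at `0`; the singularity is removable.
  rcases eq_or_ne a (-1) with rfl | ha
  · have hc : Continuous fun x : ℝ => -(x / √(1 + x ^ 2)) - arctan x :=
      (continuous_id.div (by fun_prop) fun x => by positivity).neg.sub continuous_arctan
    refine (tendsto_nhdsWithin_of_tendsto_nhds (by simpa using hc.tendsto 0)).congr' ?_
    filter_upwards [self_mem_nhdsWithin] with x hx using (shaferG_neg_one_eq hx).symm
  · have hden : (1 + (0 : ℝ) ^ 2) * (1 + a * √(1 + 0 ^ 2)) ≠ 0 := by
      norm_num
      contrapose! ha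
      linarith
    have hc : ContinuousAt (shaferG a) 0 := by
      unfold shaferG
      fun_prop (disch := exact hden)
    simpa [shaferG] using tendsto_nhdsWithin_of_tendsto_nhds hc.tendsto

lemma StrictAntiOn.lt_of_tendsto_nhdsGT {f : ℝ → ℝ} {a l x : ℝ} (hf : StrictAntiOn f (Ioi a))
    (hl : Tendsto f (𝓝[>] a) (𝓝 l)) (hx : a < x) : f x < l := by
  have hm : a < (a + x) / 2 := by linarith
  refine (hf hm hx (by linarith)).trans_le (ge_of_tendsto hl ?_)
  filter_upwards [Ioo_mem_nhdsGT hm] with y hy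
  exact (hf hy.1 hm hy.2).le

theorem shafer_g_strictAnti_and_neg (a : ℝ) (ha : a ≤ -1 ∨ a ≥ Real.sqrt 2 / 2) :
    StrictAntiOn
      (fun x : ℝ => (x + x ^ 3 + a * x * Real.sqrt (1 + x ^ 2)) /
        ((1 + x ^ 2) * (1 + a * Real.sqrt (1 + x ^ 2))) - Real.arctan x)
      (Set.Ioi (0 : ℝ)) ∧
    ∀ x : ℝ, 0 < x →
      (x + x ^ 3 + a * x * Real.sqrt (1 + x ^ 2)) /
        ((1 + x ^ 2) * (1 + a * Real.sqrt (1 + x ^ 2))) - Real.arctan x < 0 := by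
  have hanti := shaferG_strictAntiOn ha
  exact ⟨hanti, fun x hx => hanti.lt_of_tendsto_nhdsGT (tendsto_shaferG_nhdsGT_zero a) hx⟩
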